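/- arXiv:1108.5081 — 2 statements merged into one kernel-verified Lean document; each statement's English description precedes it below -/
import Mathlib

section
/- The sequences s(n) = exp(n) + sin(n) and t(n) = −exp(n) on the natural numbers both admit leading term limits with prototype sequence exp(n): s(n)/exp(n) → 1 and t(n)/exp(n) → −1 as n → ∞; but their termwise sum s(n) + t(n) = sin(n) does not converge: there is no real number c such that sin(n) → c as n → ∞ along the naturals. -/
open Real Filter

lemma sin_nat_not_tendsto : ¬ ∃ c : ℝ, Tendsto (fun n : ℕ => Real.sin n) atTop (nhds c) := by
  rintro ⟨c, h⟩
  -- sin(n+1) → c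
  have hs1 : Tendsto (fun n : ℕ => Real.sin (n + 1)) atTop (nhds c) := by
    have := h.comp (tendsto_add_atTop_nat 1)
    simpa [Function.comp_def, Nat.cast_add] using this
  -- sin(n+2) → c
  have hs2 : Tendsto (fun n : ℕ => Real.sin (n + 2)) atTop (nhds c) := by
    have := h.comp (tendsto_add_atTop_nat 2)
    simpa [Function.comp_def, Nat.cast_add] using this
  -- cos(n+1) → 0, since sin(n+2) - sin n = 2 sin 1 cos(n+1)
  have hsin1 : Real.sin 1 ≠ 0 := by
    have := Real.sin_pos_of_pos_of_lt_pi (x := 1) (by norm_num) (by linarith [Real.pi_gt_three])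
    linarith
  have hcos1 : Tendsto (fun n : ℕ => Real.cos (n + 1)) atTop (nhds 0) := by
    have hd : Tendsto (fun n : ℕ => (Real.sin (n + 2) - Real.sin n) / (2 * Real.sin 1))
        atTop (nhds ((c - c) / (2 * Real.sin 1))) := (hs2.sub h).div_const _
    have key : ∀ n : ℕ, (Real.sin (n + 2) - Real.sin n) / (2 * Real.sin 1)
        = Real.cos (n + 1) := by
      intro n
      have gen : ∀ x : ℝ, Real.sin (x + 2) - Real.sin x = 2 * Real.sin 1 * Real.cos (x + 1) := by
        intro x
        have h1 : x + 2 = (x + 1) + 1 := by ring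
        have h2 : x = (x + 1) - 1 := by ring
        rw [h1]
        nth_rewrite 2 [h2]
        generalize (x + 1) = y
        rw [Real.sin_add, Real.sin_sub]
        ring
      rw [gen]
      field_simp
    simp only [key] at hd
    simpa using hd
  -- cos n → c * sin 1
  have hcos : Tendsto (fun n : ℕ => Real.cos n) atTop (nhds (c * Real.sin 1)) := by
    have key : ∀ n : ℕ, Real.cos (n : ℝ)
        = Real.cos ((n:ℝ) + 1) * Real.cos 1 + Real.sin ((n:ℝ) + 1) * Real.sin 1 := by
      intro n
      have h2 : (n:ℝ) = ((n:ℝ) + 1) - 1 := by ring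
      nth_rewrite 1 [h2]
      rw [Real.cos_sub]
    simp only [key]
    have h2 : Tendsto (fun n : ℕ => Real.cos ((n:ℝ) + 1) * Real.cos 1 + Real.sin ((n:ℝ) + 1) * Real.sin 1) atTop (nhds (0 * Real.cos 1 + c * Real.sin 1)) :=
      (hcos1.mul tendsto_const_nhds).add (hs1.mul tendsto_const_nhds)
    simpa using h2
  -- c = 0: cos(n+1) = cos n cos 1 - sin n sin 1 → c sin1 cos1 - c sin1 = 0
  have hc0 : c = 0 := by
    have key : ∀ n : ℕ, Real.cos ((n:ℝ) + 1)
        = Real.cos n * Real.cos 1 - Real.sin n * Real.sin 1 := fun n => Real.cos_add _ _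
    have h2 : Tendsto (fun n : ℕ => Real.cos n * Real.cos 1 - Real.sin n * Real.sin 1)
        atTop (nhds (c * Real.sin 1 * Real.cos 1 - c * Real.sin 1)) :=
      (hcos.mul tendsto_const_nhds).sub (h.mul tendsto_const_nhds)
    simp only [← key] at h2
    have := tendsto_nhds_unique hcos1 h2
    have hcos1lt : Real.cos 1 < 1 := by
      have := Real.cos_one_le
      linarith
    have : c * Real.sin 1 * (Real.cos 1 - 1) = 0 := by linarith [this]
    rcases mul_eq_zero.mp this with h' | h'
    · rcases mul_eq_zero.mp h' with h'' | h''
      · exact h''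
      · exact absurd h'' hsin1
    · linarith
  subst hc0
  simp only [zero_mul] at hcos
  -- sin² + cos² → 0, but = 1
  have hsum : Tendsto (fun n : ℕ => Real.sin n ^ 2 + Real.cos n ^ 2) atTop (nhds 0) := by
    have := ((h.mul h).add (hcos.mul hcos))
    simpa [sq] using this
  have hone : Tendsto (fun n : ℕ => Real.sin n ^ 2 + Real.cos n ^ 2) atTop (nhds 1) := by
    simp only [Real.sin_sq_add_cos_sq]
    exact tendsto_const_nhds
  exact one_ne_zero (tendsto_nhds_unique hone hsum)

theorem leading_limitable_not_closed_under_add :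
    Tendsto (fun n : ℕ => (Real.exp n + Real.sin n) / Real.exp n) atTop (nhds 1) ∧
    Tendsto (fun n : ℕ => (-Real.exp n) / Real.exp n) atTop (nhds (-1)) ∧
    ¬ ∃ c : ℝ, Tendsto (fun n : ℕ => Real.sin n) atTop (nhds c) := by
  refine ⟨?_, ?_, sin_nat_not_tendsto⟩
  · have hexp : Tendsto (fun n : ℕ => Real.exp n) atTop atTop :=
      Real.tendsto_exp_atTop.comp tendsto_natCast_atTop_atTop
    have hzero : Tendsto (fun n : ℕ => Real.sin n / Real.exp n) atTop (nhds 0) := by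
      apply squeeze_zero_norm (fun n => ?_) (tendsto_inv_atTop_zero.comp hexp)
      rw [norm_div, Real.norm_eq_abs, Real.norm_eq_abs, abs_of_pos (Real.exp_pos _),
        Function.comp_apply, div_eq_mul_inv]
      exact mul_le_of_le_one_left (by positivity) (Real.abs_sin_le_one _) |>.trans (by simp)
    have : Tendsto (fun n : ℕ => 1 + Real.sin n / Real.exp n) atTop (nhds (1 + 0)) :=
      tendsto_const_nhds.add hzero
    simp only [add_zero] at this
    refine this.congr fun n => ?_
    field_simp
  · have : ∀ n : ℕ, (-Real.exp n) / Real.exp n = -1 := fun n => by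
      rw [neg_div, div_self (Real.exp_ne_zero _)]
    simp only [this]
    exact tendsto_const_nhds
end

section
/- For every natural number n, the function x ↦ exp( exp(x) · |1/(x+1) − ∑_{k=0}^{n−1} (−1)^k / x^(k+1)| ) tends to infinity as x → ∞. Consequently, for every n the ratio of exp(exp(x)/(x+1)) to exp(exp(x)·∑_{k=0}^{n−1} (−1)^k / x^(k+1)) tends to 0 or to ∞, so these two functions lie in distinct Archimedean classes. -/
open Real Filter

lemma sum_geom (n : ℕ) (x : ℝ) (hx : 1 < x) :
    1 / (x + 1) - ∑ k ∈ Finset.range n, (-1 : ℝ) ^ k / x ^ (k + 1)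
      = (-1) ^ n / (x ^ n * (x + 1)) := by
  have hx0 : x ≠ 0 := by linarith
  have hx1 : x + 1 ≠ 0 := by linarith
  induction n with
  | zero => simp
  | succ n ih =>
    rw [Finset.sum_range_succ]
    have hxn : x ^ n ≠ 0 := pow_ne_zero _ hx0
    have h : 1 / (x+1) - (∑ k ∈ Finset.range n, (-1:ℝ)^k / x^(k+1) + (-1)^n / x^(n+1))
        = ((-1:ℝ)^n / (x^n*(x+1))) - (-1)^n / x^(n+1) := by linarith [ih]
    rw [h]
    field_simp
    ring

lemma g_tendsto (n : ℕ) : Tendsto (fun x : ℝ => exp x / (x ^ n * (x + 1))) atTop atTop := by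
  have h2 : Tendsto (fun x : ℝ => exp x / x ^ (n+1) / 2) atTop atTop :=
    (tendsto_exp_div_pow_atTop (n+1)).atTop_div_const two_pos
  apply tendsto_atTop_mono' atTop _ h2
  filter_upwards [eventually_ge_atTop (1:ℝ)] with x hx
  have hx0 : (0:ℝ) < x := by linarith
  have hp : (0:ℝ) < x ^ n := pow_pos hx0 n
  have h1 : x ^ n * (x + 1) ≤ x ^ (n+1) * 2 := by
    have : x + 1 ≤ 2 * x := by linarith
    calc x ^ n * (x+1) ≤ x ^ n * (2*x) := by nlinarith
    _ = x ^ (n+1) * 2 := by ring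
  calc exp x / x ^ (n+1) / 2 = exp x / (x ^ (n+1) * 2) := by rw [div_div]
  _ ≤ exp x / (x ^ n * (x+1)) :=
      div_le_div_of_nonneg_left (exp_pos x).le (by positivity) h1

theorem feedback_rule_new_class (n : ℕ) :
    Tendsto
      (fun x : ℝ => Real.exp (Real.exp x *
        |1 / (x + 1) - ∑ k ∈ Finset.range n, (-1 : ℝ) ^ k / x ^ (k + 1)|))
      atTop atTop ∧
    (Tendsto
        (fun x : ℝ => Real.exp (Real.exp x / (x + 1)) /
          Real.exp (Real.exp x * ∑ k ∈ Finset.range n, (-1 : ℝ) ^ k / x ^ (k + 1)))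
        atTop atTop ∨
      Tendsto
        (fun x : ℝ => Real.exp (Real.exp x / (x + 1)) /
          Real.exp (Real.exp x * ∑ k ∈ Finset.range n, (-1 : ℝ) ^ k / x ^ (k + 1)))
        atTop (nhds 0)) ∧
    ¬ ∃ m : ℕ, ∀ᶠ x : ℝ in atTop,
        Real.exp (Real.exp x * ∑ k ∈ Finset.range n, (-1 : ℝ) ^ k / x ^ (k + 1)) ≤
            (m : ℝ) * Real.exp (Real.exp x / (x + 1)) ∧
        Real.exp (Real.exp x / (x + 1)) ≤
            (m : ℝ) * Real.exp (Real.exp x * ∑ k ∈ Finset.range n, (-1 : ℝ) ^ k / x ^ (k + 1)) := by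
  set S : ℝ → ℝ := fun x => ∑ k ∈ Finset.range n, (-1 : ℝ) ^ k / x ^ (k + 1) with hS
  have hg := g_tendsto n
  -- Part 1
  have h1 : Tendsto
      (fun x : ℝ => Real.exp (Real.exp x * |1 / (x + 1) - S x|)) atTop atTop := by
    apply Tendsto.congr' _ (tendsto_exp_atTop.comp hg)
    filter_upwards [eventually_gt_atTop (1:ℝ)] with x hx
    have hd := sum_geom n x hx
    have hpos : (0:ℝ) < x ^ n * (x+1) := by positivity
    simp only [Function.comp, hS]
    rw [hd, abs_div, abs_pow, abs_neg, abs_one, one_pow, abs_of_pos hpos]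
    rw [mul_one_div]
  -- expression for the ratio
  have hratio : ∀ᶠ x : ℝ in atTop,
      Real.exp (Real.exp x / (x + 1)) / Real.exp (Real.exp x * S x)
        = Real.exp ((-1:ℝ)^n * (exp x / (x ^ n * (x + 1)))) := by
    filter_upwards [eventually_gt_atTop (1:ℝ)] with x hx
    rw [← Real.exp_sub]
    congr 1
    have hd := sum_geom n x hx
    have : Real.exp x / (x+1) - Real.exp x * S x = Real.exp x * (1/(x+1) - S x) := by ring
    rw [this, hd]
    ring
  have h2 : Tendsto
        (fun x : ℝ => Real.exp (Real.exp x / (x + 1)) / Real.exp (Real.exp x * S x))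
        atTop atTop ∨
      Tendsto
        (fun x : ℝ => Real.exp (Real.exp x / (x + 1)) / Real.exp (Real.exp x * S x))
        atTop (nhds 0) := by
    rcases Nat.even_or_odd n with he | ho
    · left
      apply Tendsto.congr' (hratio.mono fun x hx => hx.symm)
      apply tendsto_exp_atTop.comp
      refine hg.congr fun x => ?_
      rw [he.neg_one_pow, one_mul]
    · right
      apply Tendsto.congr' (hratio.mono fun x hx => hx.symm)
      apply tendsto_exp_atBot.comp
      have : Tendsto (fun x : ℝ => -(exp x / (x ^ n * (x + 1)))) atTop atBot :=
        tendsto_neg_atBot_iff.mpr hg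
      refine this.congr fun x => ?_
      rw [ho.neg_one_pow]
      ring
  refine ⟨h1, h2, ?_⟩
  rintro ⟨m, hm⟩
  have hbig := h1.eventually_gt_atTop (m : ℝ)
  rcases (hm.and hbig).exists with ⟨x, ⟨hle1, hle2⟩, hgt⟩
  set a := Real.exp x / (x + 1) with ha
  set b := Real.exp x * S x with hb
  have hea := Real.exp_pos a
  have heb := Real.exp_pos b
  have hm0 : (0:ℝ) < m := by nlinarith
  have h3 : Real.exp (b - a) ≤ m := by
    rw [Real.exp_sub, div_le_iff₀ hea]; exact hle1
  have h4 : Real.exp (a - b) ≤ m := by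
    rw [Real.exp_sub, div_le_iff₀ heb]; exact hle2
  have h5 : Real.exp x * |1/(x+1) - S x| = |a - b| := by
    have h : a - b = Real.exp x * (1/(x+1) - S x) := by rw [ha, hb]; ring
    rw [h, abs_mul, abs_of_pos (Real.exp_pos x)]
  rw [h5] at hgt
  rcases le_total a b with h6 | h6
  · rw [abs_of_nonpos (by linarith), neg_sub] at hgt; linarith
  · rw [abs_of_nonneg (by linarith)] at hgt; linarith
end
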